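/- arXiv:1112.5640 — 2 statements merged into one kernel-verified Lean document; each statement's English description precedes it below -/
import Mathlib

section
/- Let f₁ = g₁ - h₁ and f₂ = g₂ - h₂ be DC functions on a convex set C ⊆ ℝˢ such that g₁, h₁, g₂, h₂ are nonnegative convex functions on C. Then the product f₁·f₂ is DC on C with decomposition f₁ f₂ = ½((g₁+g₂)² + (h₁+h₂)²) - ½((g₁+h₂)² + (g₂+h₁)²), and moreover all four squared-sum terms in this decomposition are nonnegative convex functions on C. -/
/-!
Expanding the squares, `(g₁ + g₂)² + (h₁ + h₂)² - (g₁ + h₂)² - (g₂ + h₁)²` equals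
`2 (g₁ - h₁)(g₂ - h₂)`.
Each sum of two nonnegative convex functions is nonnegative and convex, hence so is its square.
-/

lemma sub_mul_sub_eq_half_sq_add_sub_half_sq_add {K : Type*} [Field K] [CharZero K]
    (a b c d : K) :
    (a - b) * (c - d) = (1/2) * ((a + c)^2 + (b + d)^2) - (1/2) * ((a + d)^2 + (c + b)^2) := by
  ring

lemma ConvexOn.sq_add {𝕜 E : Type*} [Field 𝕜] [LinearOrder 𝕜] [IsStrictOrderedRing 𝕜]
    [AddCommGroup E] [Module 𝕜 E] {s : Set E} {f g : E → 𝕜}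
    (hf : ConvexOn 𝕜 s f) (hg : ConvexOn 𝕜 s g)
    (hf₀ : ∀ x ∈ s, 0 ≤ f x) (hg₀ : ∀ x ∈ s, 0 ≤ g x) :
    ConvexOn 𝕜 s (fun x => (f x + g x)^2) :=
  (hf.add hg).pow (fun x hx => add_nonneg (hf₀ x hx) (hg₀ x hx)) 2

theorem dc_product_general
    {s : ℕ} {C : Set (Fin s → ℝ)}
    (f₁ f₂ g₁ h₁ g₂ h₂ : (Fin s → ℝ) → ℝ)
    (hg₁ : ConvexOn ℝ C g₁) (hh₁ : ConvexOn ℝ C h₁)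
    (hg₂ : ConvexOn ℝ C g₂) (hh₂ : ConvexOn ℝ C h₂)
    (hg₁0 : ∀ x ∈ C, 0 ≤ g₁ x) (hh₁0 : ∀ x ∈ C, 0 ≤ h₁ x)
    (hg₂0 : ∀ x ∈ C, 0 ≤ g₂ x) (hh₂0 : ∀ x ∈ C, 0 ≤ h₂ x)
    (hf₁ : ∀ x ∈ C, f₁ x = g₁ x - h₁ x) (hf₂ : ∀ x ∈ C, f₂ x = g₂ x - h₂ x) :
    (∀ x ∈ C, f₁ x * f₂ x =
        (1/2) * ((g₁ x + g₂ x)^2 + (h₁ x + h₂ x)^2)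
        - (1/2) * ((g₁ x + h₂ x)^2 + (g₂ x + h₁ x)^2)) ∧
    ConvexOn ℝ C (fun x => (1/2) * ((g₁ x + g₂ x)^2 + (h₁ x + h₂ x)^2)) ∧
    ConvexOn ℝ C (fun x => (1/2) * ((g₁ x + h₂ x)^2 + (g₂ x + h₁ x)^2)) ∧
    (∀ x ∈ C, 0 ≤ (g₁ x + g₂ x)^2) ∧ (∀ x ∈ C, 0 ≤ (h₁ x + h₂ x)^2) ∧
    (∀ x ∈ C, 0 ≤ (g₁ x + h₂ x)^2) ∧ (∀ x ∈ C, 0 ≤ (g₂ x + h₁ x)^2) ∧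
    ConvexOn ℝ C (fun x => (g₁ x + g₂ x)^2) ∧
    ConvexOn ℝ C (fun x => (h₁ x + h₂ x)^2) ∧
    ConvexOn ℝ C (fun x => (g₁ x + h₂ x)^2) ∧
    ConvexOn ℝ C (fun x => (g₂ x + h₁ x)^2) := by
  have hgg := hg₁.sq_add hg₂ hg₁0 hg₂0
  have hhh := hh₁.sq_add hh₂ hh₁0 hh₂0
  have hgh := hg₁.sq_add hh₂ hg₁0 hh₂0
  have hhg := hg₂.sq_add hh₁ hg₂0 hh₁0
  refine ⟨fun x hx => ?_, (hgg.add hhh).smul one_half_pos.le,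
    (hgh.add hhg).smul one_half_pos.le, fun _ _ => sq_nonneg _, fun _ _ => sq_nonneg _,
    fun _ _ => sq_nonneg _, fun _ _ => sq_nonneg _, hgg, hhh, hgh, hhg⟩
  rw [hf₁ x hx, hf₂ x hx]
  exact sub_mul_sub_eq_half_sq_add_sub_half_sq_add _ _ _ _

theorem dc_product
    {s : ℕ} {C : Set (Fin s → ℝ)} (hC : Convex ℝ C)
    (f₁ f₂ g₁ h₁ g₂ h₂ : (Fin s → ℝ) → ℝ)
    (hg₁ : ConvexOn ℝ C g₁) (hh₁ : ConvexOn ℝ C h₁)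
    (hg₂ : ConvexOn ℝ C g₂) (hh₂ : ConvexOn ℝ C h₂)
    (hg₁0 : ∀ x ∈ C, 0 ≤ g₁ x) (hh₁0 : ∀ x ∈ C, 0 ≤ h₁ x)
    (hg₂0 : ∀ x ∈ C, 0 ≤ g₂ x) (hh₂0 : ∀ x ∈ C, 0 ≤ h₂ x)
    (hf₁ : ∀ x ∈ C, f₁ x = g₁ x - h₁ x) (hf₂ : ∀ x ∈ C, f₂ x = g₂ x - h₂ x) :
    (∀ x ∈ C, f₁ x * f₂ x =
        (1/2) * ((g₁ x + g₂ x)^2 + (h₁ x + h₂ x)^2)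
        - (1/2) * ((g₁ x + h₂ x)^2 + (g₂ x + h₁ x)^2)) ∧
    ConvexOn ℝ C (fun x => (1/2) * ((g₁ x + g₂ x)^2 + (h₁ x + h₂ x)^2)) ∧
    ConvexOn ℝ C (fun x => (1/2) * ((g₁ x + h₂ x)^2 + (g₂ x + h₁ x)^2)) ∧
    (∀ x ∈ C, 0 ≤ (g₁ x + g₂ x)^2) ∧ (∀ x ∈ C, 0 ≤ (h₁ x + h₂ x)^2) ∧
    (∀ x ∈ C, 0 ≤ (g₁ x + h₂ x)^2) ∧ (∀ x ∈ C, 0 ≤ (g₂ x + h₁ x)^2) ∧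
    ConvexOn ℝ C (fun x => (g₁ x + g₂ x)^2) ∧
    ConvexOn ℝ C (fun x => (h₁ x + h₂ x)^2) ∧
    ConvexOn ℝ C (fun x => (g₁ x + h₂ x)^2) ∧
    ConvexOn ℝ C (fun x => (g₂ x + h₁ x)^2) :=
  dc_product_general f₁ f₂ g₁ h₁ g₂ h₂ hg₁ hh₁ hg₂ hh₂ hg₁0 hh₁0 hg₂0 hh₂0 hf₁ hf₂
end

section
/- Let f : ℝˢ → ℝ be DC with decomposition f = g - h where g, h are convex, and let q : ℝ → ℝ be convex and differentiable. Suppose K is a constant with K > |q'(f(x))| for all x. Then q ∘ f is DC with decomposition q(f(x)) = p(x) - K(g(x) + h(x)), where p(x) := q(f(x)) + K(g(x) + h(x)) is convex. -/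
/-!
Write `f = g - h`. At `z = a • x + b • y`, the tangent line of `q` at `f z` gives
`q (f z) ≤ a q (f x) + b q (f y) - d (a f x + b f y - f z)` with `d = q' (f z)`. The error term
`a f x + b f y - f z` is the difference of the Jensen gaps of `g` and `h`, both nonnegative, so
`|d| ≤ K` bounds `-d (a f x + b f y - f z)` by `K` times the sum of the two gaps, which is exactly
what adding `K (g + h)` pays for.
-/

open Set

lemma ConvexOn.add_deriv_mul_sub_le {S : Set ℝ} {q : ℝ → ℝ} {c t : ℝ} (hq : ConvexOn ℝ S q)
    (hc : c ∈ S) (ht : t ∈ S) (hqc : DifferentiableAt ℝ q c) :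
    q c + deriv q c * (t - c) ≤ q t := by
  rcases lt_trichotomy c t with hct | rfl | htc
  · have := hq.deriv_le_slope hc ht hct hqc
    rw [slope_def_field, le_div_iff₀ (sub_pos.mpr hct)] at this
    linarith
  · simp
  · have := hq.slope_le_deriv ht hc htc hqc
    rw [slope_comm, slope_def_field, div_le_iff_of_neg (sub_neg.mpr htc)] at this
    linarith

lemma ConvexOn.comp_sub_add_mul_add {E : Type*} [AddCommGroup E] [Module ℝ E] {s : Set E}
    {g h : E → ℝ} {q : ℝ → ℝ} {K : ℝ} (hg : ConvexOn ℝ s g) (hh : ConvexOn ℝ s h)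
    (hq : ConvexOn ℝ univ q) (hq' : ∀ x ∈ s, DifferentiableAt ℝ q (g x - h x))
    (hK : ∀ x ∈ s, |deriv q (g x - h x)| ≤ K) :
    ConvexOn ℝ s (fun x => q (g x - h x) + K * (g x + h x)) := by
  refine ⟨hg.1, fun x hx y hy a b ha hb hab => ?_⟩
  set z := a • x + b • y
  have hz : z ∈ s := hg.1 hx hy ha hb hab
  have hgz : g z ≤ a * g x + b * g y := by simpa using hg.2 hx hy ha hb hab
  have hhz : h z ≤ a * h x + b * h y := by simpa using hh.2 hx hy ha hb hab
  have tangent_x := hq.add_deriv_mul_sub_le (mem_univ _) (mem_univ (g x - h x)) (hq' z hz)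
  have tangent_y := hq.add_deriv_mul_sub_le (mem_univ _) (mem_univ (g y - h y)) (hq' z hz)
  have hd := abs_le.mp (hK z hz)
  set d := deriv q (g z - h z)
  have error_le : -(d * ((a * g x + b * g y - g z) - (a * h x + b * h y - h z))) ≤
      K * (a * g x + b * g y - g z) + K * (a * h x + b * h y - h z) := by
    nlinarith
  simp only [smul_eq_mul]
  linear_combination a * tangent_x + b * tangent_y + error_le
    + (d * (g z - h z) - q (g z - h z)) * hab

theorem dc_convex_composition {s : ℕ}
    (f g h : (Fin s → ℝ) → ℝ) (q : ℝ → ℝ) (K : ℝ)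
    (hg : ConvexOn ℝ Set.univ g) (hh : ConvexOn ℝ Set.univ h)
    (hf : f = g - h)
    (hq : ConvexOn ℝ Set.univ q) (hq' : Differentiable ℝ q)
    (hK : ∀ x, |deriv q (f x)| < K) :
    ConvexOn ℝ Set.univ (fun x => q (f x) + K * (g x + h x)) ∧
    (∀ x, q (f x) =
      (q (f x) + K * (g x + h x)) - K * (g x + h x)) := by
  subst hf
  exact ⟨hg.comp_sub_add_mul_add hh hq (fun x _ => hq' _) (fun x _ => (hK x).le),
    fun x => (add_sub_cancel_right _ _).symm⟩
end
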